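/- arXiv:math/0602037 — 3 statements merged into one kernel-verified Lean document; each statement's English description precedes it below -/
import Mathlib

section
/- Let (Ω, B_max, P) be a probability space and B_reg ⊆ B_max a Boolean algebra. Let (B_i)_{i ∈ I} be a finite tuple of sub-σ-algebras, and let B be a sub-σ-algebra such that the tuple (B_i)_{i ∈ I} together with B obeys the uniform intersection property. Let B' be a sub-σ-algebra extending B (i.e. B ⊆ B') which is relatively independent of ⋁_{i ∈ I} B_i conditioning on B. Then the tuple (B_i)_{i ∈ I} together with B' also obeys the uniform intersection property. -/
open MeasureTheory MeasurableSpace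
open scoped ENNReal

variable {Ω : Type*}

/-- Two sub-σ-algebras `B₁, B₂` are relatively independent conditioning on `B` (w.r.t. `P`)
if `E(f₁ f₂ | B) = E(f₁ | B) · E(f₂ | B)` a.e. for all bounded `B₁`-measurable `f₁` and
bounded `B₂`-measurable `f₂`. -/
def RelIndep (m0 : MeasurableSpace Ω) (P : @Measure Ω m0)
    (B1 B2 B : MeasurableSpace Ω) : Prop :=
  ∀ f1 f2 : Ω → ℝ, Measurable[B1] f1 → Measurable[B2] f2 →
    (∃ C, ∀ x, |f1 x| ≤ C) → (∃ C, ∀ x, |f2 x| ≤ C) →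
    P[fun x => f1 x * f2 x|B] =ᵐ[P] fun x => (P[f1|B]) x * (P[f2|B]) x

/-- A tuple `(B_i)_{i ∈ ι}` of sub-σ-algebras has the **uniform intersection property** (UIP)
w.r.t. `P` and the regular algebra `Breg` if: for every tuple of events `E_i ∈ B_i` with
`P(⋀_i E_i) = 0` and every `ε > 0`, there are events `F_i ∈ B_i ∩ Breg` with
`P(E_i \ F_i) ≤ ε` for each `i` and `⋀_i F_i = ∅`. -/
def UIP (m0 : MeasurableSpace Ω) (P : @Measure Ω m0) (Breg : Set (Set Ω))
    {ι : Type*} (B : ι → MeasurableSpace Ω) : Prop :=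
  ∀ E : ι → Set Ω, (∀ i, MeasurableSet[B i] (E i)) → P (⋂ i, E i) = 0 →
    ∀ ε : ℝ, 0 < ε → ∃ F : ι → Set Ω,
      (∀ i, MeasurableSet[B i] (F i) ∧ F i ∈ Breg) ∧
      (∀ i, P (E i \ F i) ≤ ENNReal.ofReal ε) ∧
      (⋂ i, F i) = ∅

/-- **Weakly mixing extensions preserve the UIP.**  If the tuple `(B_i)_{i ∈ I}` together with
`B` obeys the UIP, and `B'` is an extension of `B` which is relatively independent of
`⋁_{i ∈ I} B_i` conditioning on `B`, then `(B_i)_{i ∈ I}` together with `B'` also obeys the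
UIP. -/
theorem uip_weakly_mixing [m0 : MeasurableSpace Ω] (P : Measure Ω) [IsProbabilityMeasure P]
    (Breg : Set (Set Ω)) (hBalg : IsSetAlgebra Breg) (hBsub : ∀ s ∈ Breg, MeasurableSet s)
    {I : Type*} [Finite I] (BB : I → MeasurableSpace Ω) (hBB : ∀ i, BB i ≤ m0)
    (B B' : MeasurableSpace Ω) (hB : B ≤ m0) (hB' : B' ≤ m0) (hBB' : B ≤ B')
    (hUIP : UIP m0 P Breg (fun i : Option I => i.elim B BB))
    (hindep : RelIndep m0 P B' (⨆ i, BB i) B) :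
    UIP m0 P Breg (fun i : Option I => i.elim B' BB) := by
  intro E hE hE0 ε hε
  classical
  letI : MeasurableSpace Ω := m0
  have := Finite.to_countable (α := I)
  set E' : Set Ω := E none with hE'def
  set Ei : Set Ω := ⋂ i : I, E (some i) with hEidef
  have hE'm : MeasurableSet[B'] E' := hE none
  have hEimsup : MeasurableSet[⨆ i, BB i] Ei :=
    MeasurableSet.iInter fun i => (le_iSup BB i) _ (hE (some i))
  have hE'm0 : MeasurableSet[m0] E' := hB' _ hE'm
  have hEim0 : MeasurableSet[m0] Ei :=
    MeasurableSet.iInter (fun i => hBB i _ (hE (some i)))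
  set f1 : Ω → ℝ := E'.indicator (fun _ => (1:ℝ)) with hf1def
  set f2 : Ω → ℝ := Ei.indicator (fun _ => (1:ℝ)) with hf2def
  have hf1m : Measurable[B'] f1 := measurable_const.indicator hE'm
  have hf2m : Measurable[⨆ i, BB i] f2 := measurable_const.indicator hEimsup
  have hf1b : ∃ C, ∀ x, |f1 x| ≤ C := ⟨1, fun x => by
    by_cases hx : x ∈ E' <;> simp [f1, Set.indicator, hx]⟩
  have hf2b : ∃ C, ∀ x, |f2 x| ≤ C := ⟨1, fun x => by
    by_cases hx : x ∈ Ei <;> simp [f2, Set.indicator, hx]⟩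
  have hf1int : Integrable f1 P := (integrable_const 1).indicator hE'm0
  have hf2int : Integrable f2 P := (integrable_const 1).indicator hEim0
  -- P (E' ∩ Ei) = 0
  have hnull : P (E' ∩ Ei) = 0 := by
    rw [← hE0, Set.iInter_option E]
  have hzero : (fun x => f1 x * f2 x) =ᵐ[P] (0 : Ω → ℝ) := by
    have h1 : ∀ᵐ x ∂P, x ∉ E' ∩ Ei := (measure_eq_zero_iff_ae_notMem (μ := P)).mp hnull
    filter_upwards [h1] with x hx
    by_cases hx1 : x ∈ E'
    · have hx2 : x ∉ Ei := fun h => hx ⟨hx1, h⟩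
      simp [f1, f2, Set.indicator, hx1, hx2]
    · simp [f1, f2, Set.indicator, hx1]
  have hcond0 : P[fun x => f1 x * f2 x|B] =ᵐ[P] (0 : Ω → ℝ) :=
    (condExp_congr_ae hzero).trans (by rw [condExp_zero])
  have hgh : (fun x => (P[f1|B]) x * (P[f2|B]) x) =ᵐ[P] (0 : Ω → ℝ) :=
    (hindep f1 f2 hf1m hf2m hf1b hf2b).symm.trans hcond0
  set g : Ω → ℝ := P[f1|B] with hgdef
  set h : Ω → ℝ := P[f2|B] with hhdef
  have hgB : Measurable[B] g := stronglyMeasurable_condExp.measurable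
  set E₀ : Set Ω := {x | g x ≠ 0} with hE₀def
  have hE₀mB : MeasurableSet[B] E₀ := (hgB (measurableSet_singleton 0)).compl
  have hE₀m0 : MeasurableSet[m0] E₀ := hB _ hE₀mB
  -- (a) P (E' \ E₀) = 0
  have ha : P (E' \ E₀) = 0 := by
    have h1 : ∫ x in E₀ᶜ, g x ∂P = ∫ x in E₀ᶜ, f1 x ∂P :=
      setIntegral_condExp hB hf1int hE₀mB.compl
    have h2 : ∫ x in E₀ᶜ, g x ∂P = 0 :=
      setIntegral_eq_zero_of_forall_eq_zero fun x hx => not_not.mp hx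
    have h3 : ∫ x in E₀ᶜ, f1 x ∂P = (P (E₀ᶜ ∩ E')).toReal := by
      rw [show f1 = E'.indicator (fun _ => (1:ℝ)) from rfl]
      rw [setIntegral_indicator hE'm0, setIntegral_const, smul_eq_mul, mul_one]; rfl
    have h4 : (P (E₀ᶜ ∩ E')).toReal = 0 := by rw [← h3, ← h1, h2]
    have h5 : P (E₀ᶜ ∩ E') = 0 := by
      rcases (ENNReal.toReal_eq_zero_iff _).mp h4 with h | h
      · exact h
      · exact absurd h (measure_ne_top P _)
    rw [Set.diff_eq, Set.inter_comm]
    exact h5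
  -- (b) P (E₀ ∩ Ei) = 0
  have hb : P (E₀ ∩ Ei) = 0 := by
    have h1 : ∫ x in E₀, h x ∂P = ∫ x in E₀, f2 x ∂P :=
      setIntegral_condExp hB hf2int hE₀mB
    have hrestr : ∀ᵐ x ∂(P.restrict E₀), h x = 0 := by
      filter_upwards [ae_restrict_of_ae hgh, ae_restrict_mem hE₀m0] with x hx hxE
      exact (mul_eq_zero.mp hx).resolve_left hxE
    have h2 : ∫ x in E₀, h x ∂P = 0 := by
      rw [integral_congr_ae hrestr, integral_zero]
    have h3 : ∫ x in E₀, f2 x ∂P = (P (E₀ ∩ Ei)).toReal := by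
      rw [show f2 = Ei.indicator (fun _ => (1:ℝ)) from rfl]
      rw [setIntegral_indicator hEim0, setIntegral_const, smul_eq_mul, mul_one]; rfl
    have h4 : (P (E₀ ∩ Ei)).toReal = 0 := by rw [← h3, ← h1, h2]
    rcases (ENNReal.toReal_eq_zero_iff _).mp h4 with hh | hh
    · exact hh
    · exact absurd hh (measure_ne_top P _)
  -- apply hUIP
  set E₂ : Option I → Set Ω := fun o => o.elim E₀ (fun i => E (some i)) with hE₂def
  have hE₂meas : ∀ o, MeasurableSet[(o.elim B BB)] (E₂ o) := by
    rintro (_ | i)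
    · exact hE₀mB
    · exact hE (some i)
  have hE₂null : P (⋂ o, E₂ o) = 0 := by
    rw [Set.iInter_option E₂]; exact hb
  obtain ⟨F, hFmeas, hFclose, hFempty⟩ := hUIP E₂ hE₂meas hE₂null ε hε
  refine ⟨F, ?_, ?_, hFempty⟩
  · rintro (_ | i)
    · exact ⟨hBB' _ (hFmeas none).1, (hFmeas none).2⟩
    · exact hFmeas (some i)
  · rintro (_ | i)
    · calc P (E none \ F none) ≤ P ((E' \ E₀) ∪ (E₀ \ F none)) := by
            refine measure_mono fun x hx => ?_
            by_cases hxE : x ∈ E₀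
            · exact Or.inr ⟨hxE, hx.2⟩
            · exact Or.inl ⟨hx.1, hxE⟩
          _ ≤ P (E' \ E₀) + P (E₀ \ F none) := measure_union_le _ _
          _ ≤ 0 + ENNReal.ofReal ε := by
            exact add_le_add ha.le (hFclose none)
          _ = ENNReal.ofReal ε := by rw [zero_add]
    · exact hFclose (some i)
end

section
/- Let (Ω, B_max, P) be a probability space and B_reg ⊆ B_max a Boolean algebra. Let l ≥ 1, let B_0 be a sub-σ-algebra, let B_1, …, B_l be sub-σ-algebras of B_0, and let B'_1, …, B'_l be finite sub-σ-algebras of B_max. Let (B̃_i)_{i ∈ I} be an additional finite tuple of sub-σ-algebras. If the tuple (B̃_i)_{i ∈ I} together with (B_1 ∨ B'_1, …, B_l ∨ B'_l, B_0) obeys the uniform intersection property, then the tuple (B̃_i)_{i ∈ I} together with the single σ-algebra B_0 ∨ B'_1 ∨ … ∨ B'_l also obeys the uniform intersection property. -/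
/-!
Adjoining the finite σ-algebras `B'ⱼ` to `B₀` only cuts `Ω` into finitely many atoms
`⋂ⱼ Aⱼ`, with `Aⱼ` an atom of `B'ⱼ`. On each atom an event of `B₀ ∨ ⋁ⱼ B'ⱼ` agrees with an event
`S` of `B₀`, so the event is a finite union of rectangles `S ∩ ⋂ⱼ Aⱼ` whose sides lie in `B₀` and
in the `Bⱼ ∨ B'ⱼ`. Apply the UIP of the larger tuple to each rectangle (together with the events
of the `B̃ᵢ`) with a suitably smaller `ε`, and glue: for the new σ-algebra take the union over the
rectangles of the intersections of the sides obtained, for each `B̃ᵢ` the intersection over the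
rectangles.
-/

open MeasureTheory MeasurableSpace
open scoped ENNReal

variable {Ω : Type*}

theorem MeasurableSet.measurableAtom_of_finite {m : MeasurableSpace Ω}
    (h : {s : Set Ω | MeasurableSet[m] s}.Finite) (x : Ω) :
    MeasurableSet[m] (@measurableAtom Ω m x) := by
  have : @measurableAtom Ω m x = ⋂ s ∈ {s : Set Ω | MeasurableSet[m] s ∧ x ∈ s}, s := by
    ext; simp [measurableAtom, imp.swap]
  rw [this]
  exact .biInter (h.subset fun s hs => hs.1).countable fun s hs => hs.1

theorem measurableAtom_subset_or_disjoint {m : MeasurableSpace Ω} {s : Set Ω}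
    (hs : MeasurableSet[m] s) (x : Ω) :
    @measurableAtom Ω m x ⊆ s ∨ Disjoint (@measurableAtom Ω m x) s := by
  by_cases hx : x ∈ s
  · exact .inl (measurableAtom_subset hs hx)
  · exact .inr (Set.subset_compl_iff_disjoint_right.1 (measurableAtom_subset hs.compl hx))

/-- On the subtype `A` every `m j`-measurable set is empty or everything, so the trace of
`m₀ ⊔ ⨆ j, m j` on `A` is the trace of `m₀`. -/
theorem exists_inter_eq_inter_of_measurableSet_sup_iSup {ι : Type*} {m₀ : MeasurableSpace Ω}
    {m : ι → MeasurableSpace Ω} {A T : Set Ω}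
    (hA : ∀ j s, MeasurableSet[m j] s → A ⊆ s ∨ Disjoint A s)
    (hT : MeasurableSet[m₀ ⊔ ⨆ j, m j] T) : ∃ S, MeasurableSet[m₀] S ∧ A ∩ S = A ∩ T := by
  have hm : ∀ j, (m j).comap ((↑) : A → Ω) ≤ m₀.comap (↑) := by
    rintro j _ ⟨s, hs, rfl⟩
    rcases hA j s hs with h | h
    · convert @MeasurableSet.univ _ (m₀.comap ((↑) : A → Ω))
      exact Set.eq_univ_of_forall fun x => h x.2
    · convert @MeasurableSet.empty _ (m₀.comap ((↑) : A → Ω))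
      exact Set.eq_empty_of_forall_notMem fun x hx => h.notMem_of_mem_left x.2 hx
  have hT' : MeasurableSet[(m₀ ⊔ ⨆ j, m j).comap ((↑) : A → Ω)] ((↑) ⁻¹' T) := ⟨T, hT, rfl⟩
  rw [comap_sup, comap_iSup, sup_eq_left.2 (iSup_le hm)] at hT'
  obtain ⟨S, hS, hST⟩ := hT'
  exact ⟨S, hS, Subtype.preimage_coe_eq_preimage_coe_iff.1 hST⟩

def IsFiniteUnionOfRectangles {J : Type*} (C : J → MeasurableSpace Ω) (T : Set Ω) : Prop :=
  ∃ K : Finset (J → Set Ω), (∀ Q ∈ K, ∀ k, MeasurableSet[C k] (Q k)) ∧ T = ⋃ Q ∈ K, ⋂ k, Q k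

theorem IsFiniteUnionOfRectangles.mono {J : Type*} {C C' : J → MeasurableSpace Ω} {T : Set Ω}
    (hT : IsFiniteUnionOfRectangles C T) (hC : ∀ k, C k ≤ C' k) :
    IsFiniteUnionOfRectangles C' T :=
  let ⟨K, hK, hTK⟩ := hT
  ⟨K, fun Q hQ k => hC k _ (hK Q hQ k), hTK⟩

theorem isFiniteUnionOfRectangles_of_measurableSet_sup_iSup {J : Type*} [Finite J]
    {m₀ : MeasurableSpace Ω} {m : J → MeasurableSpace Ω}
    (hm : ∀ j, {s : Set Ω | MeasurableSet[m j] s}.Finite) {T : Set Ω}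
    (hT : MeasurableSet[m₀ ⊔ ⨆ j, m j] T) :
    IsFiniteUnionOfRectangles (fun k : Option J => k.elim m₀ m) T := by
  set τ : Ω → J → Set Ω := fun x j => @measurableAtom Ω (m j) x
  have hτ : (Set.range τ).Finite := (Set.Finite.pi hm).subset <| by
    rintro _ ⟨x, rfl⟩ j -
    exact MeasurableSet.measurableAtom_of_finite (hm j) x
  have hS : ∀ f ∈ Set.range τ, ∃ S, MeasurableSet[m₀] S ∧ (⋂ j, f j) ∩ S = (⋂ j, f j) ∩ T := by
    rintro _ ⟨x, rfl⟩
    refine exists_inter_eq_inter_of_measurableSet_sup_iSup (m := m) (fun j s hs => ?_) hT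
    exact (measurableAtom_subset_or_disjoint hs x).imp (Set.iInter_subset _ j).trans
      (Disjoint.mono_left (Set.iInter_subset _ j))
  choose! S hSm hST using hS
  have hTS : T = ⋃ f ∈ Set.range τ, (⋂ j, f j) ∩ S f := by
    refine subset_antisymm (fun x hx => ?_) (Set.iUnion₂_subset fun f hf => ?_)
    · have hxS : x ∈ (⋂ j, τ x j) ∩ S (τ x) := by
        rw [hST _ ⟨x, rfl⟩]
        exact ⟨Set.mem_iInter.2 fun j => @mem_measurableAtom_self Ω (m j) x, hx⟩
      exact Set.mem_biUnion ⟨x, rfl⟩ hxS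
    · rw [hST f hf]
      exact Set.inter_subset_right
  refine ⟨(hτ.image fun f k => k.elim (S f) f).toFinset, ?_, ?_⟩
  · simp only [Set.Finite.mem_toFinset, Set.mem_image]
    rintro _ ⟨f, hf, rfl⟩ (_ | j)
    · exact hSm f hf
    · obtain ⟨x, rfl⟩ := hf
      exact MeasurableSet.measurableAtom_of_finite (hm j) x
  · simp [hTS, Set.iInter_option, Set.inter_comm]

theorem measure_biUnion_finset_le_ofReal {α : Type*} [MeasurableSpace Ω] (μ : Measure Ω)
    (s : Finset α) (g : α → Set Ω) {δ : ℝ} (h : ∀ a ∈ s, μ (g a) ≤ ENNReal.ofReal δ) :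
    μ (⋃ a ∈ s, g a) ≤ ENNReal.ofReal (s.card * δ) :=
  calc μ (⋃ a ∈ s, g a) ≤ ∑ a ∈ s, μ (g a) := measure_biUnion_finset_le s g
    _ ≤ s.card • ENNReal.ofReal δ := Finset.sum_le_card_nsmul _ _ _ h
    _ = ENNReal.ofReal (s.card * δ) := by rw [← ENNReal.ofReal_nsmul, nsmul_eq_mul]

theorem measure_biUnion_iInter_diff_le {α J : Type*} [Fintype J] [MeasurableSpace Ω]
    (μ : Measure Ω) (K : Finset α) {Q G : α → J → Set Ω} {δ : ℝ}
    (h : ∀ a ∈ K, ∀ k, μ (Q a k \ G a k) ≤ ENNReal.ofReal δ) :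
    μ ((⋃ a ∈ K, ⋂ k, Q a k) \ ⋃ a ∈ K, ⋂ k, G a k) ≤
      ENNReal.ofReal (K.card * (Fintype.card J * δ)) := by
  have hsub : (⋃ a ∈ K, ⋂ k, Q a k) \ ⋃ a ∈ K, ⋂ k, G a k ⊆
      ⋃ a ∈ K, ⋃ k ∈ Finset.univ, Q a k \ G a k := by
    rintro x ⟨hxQ, hxG⟩
    obtain ⟨a, ha, hxQ⟩ := Set.mem_iUnion₂.1 hxQ
    obtain ⟨k, hk⟩ : ∃ k, x ∉ G a k := by
      by_contra! hx
      exact hxG (Set.mem_iUnion₂.2 ⟨a, ha, Set.mem_iInter.2 hx⟩)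
    exact Set.mem_iUnion₂.2
      ⟨a, ha, Set.mem_iUnion₂.2 ⟨k, Finset.mem_univ k, Set.mem_iInter.1 hxQ k, hk⟩⟩
  have hbound := measure_biUnion_finset_le_ofReal μ K _ fun a ha =>
    measure_biUnion_finset_le_ofReal μ Finset.univ _ fun k _ => h a ha k
  rw [Finset.card_univ] at hbound
  exact (measure_mono hsub).trans hbound

-- `m0` is bound last among the σ-algebras: instance search tries the latest local instance
-- first, and the measure lemmas applied to `P` need `m0`.
theorem UIP.option_elim_of_isFiniteUnionOfRectangles {I J : Type*} [Fintype J]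
    {Bt : I → MeasurableSpace Ω} {C : J → MeasurableSpace Ω} {D : MeasurableSpace Ω}
    {m0 : MeasurableSpace Ω} {P : Measure Ω}
    {Breg : Set (Set Ω)} (hBalg : IsSetAlgebra Breg)
    (hUIP : UIP m0 P Breg (Sum.elim Bt C)) (hCD : ∀ k, C k ≤ D)
    (hD : ∀ T, MeasurableSet[D] T → IsFiniteUnionOfRectangles C T) :
    UIP m0 P Breg (fun i : Option I => i.elim D Bt) := by
  intro E hE hE0 ε hε
  obtain ⟨K, hKm, hEK⟩ := hD _ (hE none)
  obtain ⟨δ, hδ, hδε⟩ := exists_pos_mul_lt hε (K.card * (Fintype.card J + 1))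
  have hG : ∀ Q ∈ K, ∃ G : I ⊕ J → Set Ω,
      (∀ k, MeasurableSet[Sum.elim Bt C k] (G k) ∧ G k ∈ Breg) ∧
      (∀ k, P (Sum.elim (fun i => E (some i)) Q k \ G k) ≤ ENNReal.ofReal δ) ∧
      ⋂ k, G k = ∅ := by
    intro Q hQ
    refine hUIP _ (Sum.forall.2 ⟨fun i => hE (some i), hKm Q hQ⟩) (measure_mono_null ?_ hE0) δ hδ
    intro x hx
    rw [Set.mem_iInter] at hx ⊢
    rintro (_ | i)
    · rw [hEK]
      exact Set.mem_iUnion₂.2 ⟨Q, hQ, Set.mem_iInter.2 fun k => hx (.inr k)⟩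
    · exact hx (.inl i)
  choose! G hGm hGE hG0 using hG
  refine ⟨fun i => i.elim (⋃ Q ∈ K, ⋂ k, G Q (.inr k)) fun i => ⋂ Q ∈ K, G Q (.inl i),
    ?_, ?_, ?_⟩
  · rintro (_ | i)
    · refine ⟨.biUnion K.countable_toSet fun Q hQ =>
        .iInter fun k => hCD k _ (hGm Q hQ (.inr k)).1, hBalg.biUnion_mem K fun Q hQ => ?_⟩
      simpa using hBalg.biInter_mem Finset.univ fun k _ => (hGm Q hQ (.inr k)).2
    · exact ⟨.biInter K.countable_toSet fun Q hQ => (hGm Q hQ (.inl i)).1,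
        hBalg.biInter_mem K fun Q hQ => (hGm Q hQ (.inl i)).2⟩
  · rintro (_ | i)
    · rw [hEK]
      refine (measure_biUnion_iInter_diff_le P K fun Q hQ k => hGE Q hQ (.inr k)).trans
        (ENNReal.ofReal_le_ofReal ?_)
      nlinarith
    · simp only [Option.elim, Set.sdiff_iInter]
      refine (measure_biUnion_finset_le_ofReal P K _ fun Q hQ => hGE Q hQ (.inl i)).trans
        (ENNReal.ofReal_le_ofReal ?_)
      nlinarith
  · refine Set.eq_empty_of_forall_notMem fun x hx => ?_
    rw [Set.mem_iInter] at hx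
    obtain ⟨Q, hQ, hxQ⟩ := Set.mem_iUnion₂.1 (hx none)
    have hxG : x ∈ ⋂ k, G Q k := Set.mem_iInter.2 <| Sum.forall.2
      ⟨fun i => Set.mem_iInter₂.1 (hx (some i)) Q hQ, Set.mem_iInter.1 hxQ⟩
    rwa [hG0 Q hQ] at hxG

theorem uip_finite_rank_general [m0 : MeasurableSpace Ω] (P : Measure Ω)
    (Breg : Set (Set Ω)) (hBalg : IsSetAlgebra Breg)
    (l : ℕ)
    (B0 : MeasurableSpace Ω)
    (B : Fin l → MeasurableSpace Ω) (hB : ∀ j, B j ≤ B0)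
    (B' : Fin l → MeasurableSpace Ω)
    (hfin : ∀ j, {s : Set Ω | MeasurableSet[B' j] s}.Finite)
    {I : Type*} (Bt : I → MeasurableSpace Ω)
    (hUIP : UIP m0 P Breg
      (Sum.elim Bt (fun j : Option (Fin l) => j.elim B0 (fun j => B j ⊔ B' j)))) :
    UIP m0 P Breg (fun i : Option I => i.elim (B0 ⊔ ⨆ j, B' j) Bt) := by
  refine hUIP.option_elim_of_isFiniteUnionOfRectangles hBalg ?_ fun T hT => ?_
  · rintro (_ | j)
    · exact le_sup_left
    · exact sup_le ((hB j).trans le_sup_left) ((le_iSup B' j).trans le_sup_right)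
  · refine (isFiniteUnionOfRectangles_of_measurableSet_sup_iSup hfin hT).mono ?_
    rintro (_ | j)
    · exact le_rfl
    · exact le_sup_right

/-- **Finite rank extensions preserve the UIP.**  Let `B₀` be a sub-σ-algebra, `B₁, …, B_l`
factors of `B₀`, and `B'₁, …, B'_l` finite σ-algebras.  If the tuple `(B̃_i)_{i ∈ I}`
together with `(B₁ ∨ B'₁, …, B_l ∨ B'_l, B₀)` obeys the UIP, then `(B̃_i)_{i ∈ I}` together
with `B₀ ∨ B'₁ ∨ … ∨ B'_l` also obeys the UIP. -/
theorem uip_finite_rank [m0 : MeasurableSpace Ω] (P : Measure Ω) [IsProbabilityMeasure P]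
    (Breg : Set (Set Ω)) (hBalg : IsSetAlgebra Breg) (hBsub : ∀ s ∈ Breg, MeasurableSet s)
    (l : ℕ) (hl : 1 ≤ l)
    (B0 : MeasurableSpace Ω) (hB0 : B0 ≤ m0)
    (B : Fin l → MeasurableSpace Ω) (hB : ∀ j, B j ≤ B0)
    (B' : Fin l → MeasurableSpace Ω) (hB' : ∀ j, B' j ≤ m0)
    (hfin : ∀ j, {s : Set Ω | MeasurableSet[B' j] s}.Finite)
    {I : Type*} [Finite I] (Bt : I → MeasurableSpace Ω) (hBt : ∀ i, Bt i ≤ m0)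
    (hUIP : UIP m0 P Breg
      (Sum.elim Bt (fun j : Option (Fin l) => j.elim B0 (fun j => B j ⊔ B' j)))) :
    UIP m0 P Breg (fun i : Option I => i.elim (B0 ⊔ ⨆ j, B' j) Bt) :=
  uip_finite_rank_general (m0 := m0) P Breg hBalg l B0 B hB B' hfin Bt hUIP
end

section
/- Let (Ω, B_max, P) be a probability space and B_reg ⊆ B_max a Boolean algebra. Let A be a totally ordered set, let I be a finite index set, and for each α ∈ A let (B_{α,i})_{i ∈ I} be a tuple of sub-σ-algebras obeying the uniform intersection property, increasing in the sense that B_{α,i} ⊆ B_{β,i} whenever α < β and i ∈ I. Let B_i := ⋁_{α ∈ A} B_{α,i}, and suppose that for every i ∈ I and α ∈ A, the σ-algebras B_i and ⋁_{j ∈ I, j ≠ i} B_{α,j} are relatively independent conditioning on B_{α,i}. Then the tuple (B_i)_{i ∈ I} also obeys the uniform intersection property. -/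
open MeasureTheory MeasurableSpace
open scoped ENNReal

variable {Ω : Type*}

open scoped symmDiff


lemma uip_approx {Ω : Type*} [m0 : MeasurableSpace Ω] (P : Measure Ω) [IsFiniteMeasure P]
    {A : Type*} [LinearOrder A] [Nonempty A]
    (C : A → MeasurableSpace Ω) (hsub : ∀ a, C a ≤ m0)
    (hmono : ∀ a b : A, a ≤ b → C a ≤ C b)
    {E : Set Ω} (hE : MeasurableSet[⨆ a, C a] E) (r : ℝ) (hr : 0 < r) :
    ∃ a : A, ∃ S : Set Ω, MeasurableSet[C a] S ∧ P (E ∆ S) ≤ ENNReal.ofReal r := by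
  have key : ∀ E : Set Ω, MeasurableSet[⨆ a, C a] E →
      MeasurableSet[m0] E ∧ ∀ r : ℝ, 0 < r →
        ∃ a : A, ∃ S : Set Ω, MeasurableSet[C a] S ∧ P (E ∆ S) ≤ ENNReal.ofReal r := by
    intro E hE
    rw [measurableSet_iSup] at hE
    induction hE with
    | basic u hu =>
      obtain ⟨a, hu⟩ := hu
      exact ⟨hsub a _ hu, fun r hr => ⟨a, u, hu, by simp⟩⟩
    | empty =>
      exact ⟨MeasurableSet.empty, fun r hr =>
        ⟨Classical.arbitrary A, ∅, @MeasurableSet.empty _ (C _), by simp⟩⟩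
    | compl u hu ih =>
      refine ⟨ih.1.compl, fun r hr => ?_⟩
      obtain ⟨a, S, hS, hP⟩ := ih.2 r hr
      exact ⟨a, Sᶜ, hS.compl, by rwa [compl_symmDiff_compl]⟩
    | iUnion f hf ih =>
      have hfm : ∀ k, MeasurableSet[m0] (f k) := fun k => (ih k).1
      refine ⟨MeasurableSet.iUnion hfm, fun r hr => ?_⟩
      -- choose K with P (⋃ f \ Accumulate f K) small
      have htend : Filter.Tendsto (fun K => P ((⋃ k, f k) \ Set.accumulate f K))
          Filter.atTop (nhds 0) := by
        have h1 : Filter.Tendsto (fun K => P (Set.accumulate f K)) Filter.atTop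
            (nhds (P (⋃ k, f k))) := tendsto_measure_iUnion_accumulate
        have h2 : (fun K => P ((⋃ k, f k) \ Set.accumulate f K))
            = fun K => P (⋃ k, f k) - P (Set.accumulate f K) := by
          funext K
          exact measure_diff (Set.accumulate_subset_iUnion K)
            (MeasurableSet.nullMeasurableSet (by
              exact MeasurableSet.biUnion (Set.to_countable _) fun k _ => hfm k))
            (measure_ne_top P _)
        rw [h2]
        have := ENNReal.Tendsto.sub (tendsto_const_nhds
          (x := P (⋃ k, f k)) (f := Filter.atTop)) h1 (Or.inl (measure_ne_top P _))
        simpa using this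
      have hev : ∀ᶠ K in Filter.atTop,
          P ((⋃ k, f k) \ Set.accumulate f K) < ENNReal.ofReal (r / 2) :=
        htend.eventually_lt_const (by positivity)
      obtain ⟨K, hK⟩ := hev.exists
      -- approximate each f k for k ≤ K
      have hchoice : ∀ k : ℕ, ∃ a : A, ∃ S : Set Ω, MeasurableSet[C a] S ∧
          P (f k ∆ S) ≤ ENNReal.ofReal (r / (2 * (K + 1))) := fun k =>
        (ih k).2 _ (by positivity)
      choose ak Sk hSk hPk using hchoice
      obtain ⟨a, ha⟩ := Finset.exists_le ((Finset.range (K + 1)).image ak)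
      have hak : ∀ k ∈ Finset.range (K + 1), ak k ≤ a := fun k hk =>
        ha _ (Finset.mem_image_of_mem ak hk)
      refine ⟨a, ⋃ k ∈ Finset.range (K + 1), Sk k, ?_, ?_⟩
      · exact MeasurableSet.biUnion (Finset.range (K + 1)).countable_toSet
          fun k hk => hmono _ _ (hak k hk) _ (hSk k)
      · have hincl : (⋃ k, f k) ∆ (⋃ k ∈ Finset.range (K + 1), Sk k) ⊆
            ((⋃ k, f k) \ Set.accumulate f K) ∪ ⋃ k ∈ Finset.range (K + 1), (f k ∆ Sk k) := by
          intro x hx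
          rcases Set.mem_symmDiff.mp hx with ⟨hx1, hx2⟩ | ⟨hx1, hx2⟩
          · by_cases hxa : x ∈ Set.accumulate f K
            · obtain ⟨k, hk, hxk⟩ := Set.mem_iUnion₂.mp hxa
              refine Or.inr (Set.mem_iUnion₂.mpr ⟨k, Finset.mem_range_succ_iff.mpr hk, ?_⟩)
              exact Set.mem_symmDiff.mpr (Or.inl ⟨hxk, fun hxS =>
                hx2 (Set.mem_iUnion₂.mpr ⟨k, Finset.mem_range_succ_iff.mpr hk, hxS⟩)⟩)
            · exact Or.inl ⟨hx1, hxa⟩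
          · obtain ⟨k, hk, hxk⟩ := Set.mem_iUnion₂.mp hx1
            refine Or.inr (Set.mem_iUnion₂.mpr ⟨k, hk, ?_⟩)
            exact Set.mem_symmDiff.mpr (Or.inr ⟨hxk, fun hxf =>
              hx2 (Set.mem_iUnion.mpr ⟨k, hxf⟩)⟩)
        calc P ((⋃ k, f k) ∆ (⋃ k ∈ Finset.range (K + 1), Sk k))
            ≤ P (((⋃ k, f k) \ Set.accumulate f K) ∪ ⋃ k ∈ Finset.range (K + 1), (f k ∆ Sk k)) :=
              measure_mono hincl
          _ ≤ P ((⋃ k, f k) \ Set.accumulate f K)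
              + P (⋃ k ∈ Finset.range (K + 1), (f k ∆ Sk k)) := measure_union_le _ _
          _ ≤ ENNReal.ofReal (r / 2) + ∑ k ∈ Finset.range (K + 1), P (f k ∆ Sk k) := by
              gcongr
              exact measure_biUnion_finset_le _ _
          _ ≤ ENNReal.ofReal (r / 2)
              + ∑ k ∈ Finset.range (K + 1), ENNReal.ofReal (r / (2 * (K + 1))) := by
              gcongr with k hk
              exact hPk k
          _ ≤ ENNReal.ofReal r := by
              rw [Finset.sum_const, Finset.card_range, nsmul_eq_mul]
              have : ((K + 1 : ℕ) : ℝ≥0∞) * ENNReal.ofReal (r / (2 * (K + 1)))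
                  = ENNReal.ofReal (r / 2) := by
                rw [← ENNReal.ofReal_natCast, ← ENNReal.ofReal_mul (by positivity)]
                congr 1
                field_simp
                push_cast
                ring
              rw [this, ← ENNReal.ofReal_add (by positivity) (by positivity)]
              simp [add_halves]
  obtain ⟨-, h⟩ := key E hE
  exact h r hr



lemma integrable_indicator_one {Ω : Type*} [m0 : MeasurableSpace Ω] (P : Measure Ω)
    [IsFiniteMeasure P] {u : Set Ω} (hu : MeasurableSet u) :
    Integrable (u.indicator (1 : Ω → ℝ)) P :=
  (integrable_const 1).indicator hu

lemma integral_indicator_one' {Ω : Type*} [m0 : MeasurableSpace Ω] (P : Measure Ω)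
    {u : Set Ω} (hu : MeasurableSet u) :
    ∫ x, u.indicator (1 : Ω → ℝ) x ∂P = (P u).toReal :=
  integral_indicator_one hu

lemma uip_part1 {Ω : Type*} [m0 : MeasurableSpace Ω] (P : Measure Ω) [IsProbabilityMeasure P]
    {m : MeasurableSpace Ω} (hm : m ≤ m0)
    {E S : Set Ω} (hEm : MeasurableSet[m0] E) (hS : MeasurableSet[m] S)
    {σ r : ℝ} (hσ : 0 < σ) (hr : 0 < r) (hES : P (E ∆ S) ≤ ENNReal.ofReal r) :
    P (E \ {x | 1 - σ < (P[E.indicator (1 : Ω → ℝ) | m]) x}) ≤ ENNReal.ofReal (r + r / σ) := by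
  have hSm0 : MeasurableSet[m0] S := hm _ hS
  have hint : ∀ u : Set Ω, MeasurableSet[m0] u → Integrable (u.indicator (1 : Ω → ℝ)) P :=
    fun u hu => integrable_indicator_one (m0 := m0) P hu
  set g : Ω → ℝ := P[(S \ E).indicator (1 : Ω → ℝ) | m] with hg_def
  have hg0 : 0 ≤ᵐ[P] g := condExp_nonneg (Filter.Eventually.of_forall fun x =>
    Set.indicator_nonneg (fun _ _ => zero_le_one) x)
  have hpt : ∀ x, S.indicator (1 : Ω → ℝ) x - (S \ E).indicator (1 : Ω → ℝ) x
      ≤ E.indicator (1 : Ω → ℝ) x := by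
    intro x
    by_cases hxS : x ∈ S <;> by_cases hxE : x ∈ E <;>
      simp [Set.indicator_apply, hxS, hxE]
  have hcond : P[fun x => S.indicator (1 : Ω → ℝ) x - (S \ E).indicator (1 : Ω → ℝ) x | m]
      ≤ᵐ[P] P[E.indicator (1 : Ω → ℝ) | m] :=
    condExp_mono ((hint _ hSm0).sub (hint _ (hSm0.diff hEm))) (hint _ hEm)
      (Filter.Eventually.of_forall hpt)
  have hsub_cond : P[fun x => S.indicator (1 : Ω → ℝ) x - (S \ E).indicator (1 : Ω → ℝ) x | m]
      =ᵐ[P] fun x => (P[S.indicator (1 : Ω → ℝ) | m]) x - g x :=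
    condExp_sub (hint _ hSm0) (hint _ (hSm0.diff hEm)) m
  have hSid : P[S.indicator (1 : Ω → ℝ) | m] = S.indicator (1 : Ω → ℝ) :=
    condExp_of_stronglyMeasurable hm (stronglyMeasurable_one.indicator hS) (hint _ hSm0)
  have key : ∀ᵐ x ∂P, S.indicator (1 : Ω → ℝ) x - g x ≤ (P[E.indicator (1 : Ω → ℝ) | m]) x := by
    filter_upwards [hcond, hsub_cond] with x h1 h2
    rw [h2, hSid] at h1
    exact h1
  have hsub2 : ∀ᵐ x ∂P, x ∈ E \ {x | 1 - σ < (P[E.indicator (1 : Ω → ℝ) | m]) x} →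
      x ∈ (E \ S) ∪ {x | σ ≤ g x} := by
    filter_upwards [key] with x hx hxEG
    obtain ⟨hxE, hxG⟩ := hxEG
    by_cases hxS : x ∈ S
    · right
      simp only [Set.mem_setOf_eq] at hxG ⊢
      by_contra hxb
      push_neg at hxb
      rw [Set.indicator_of_mem hxS] at hx
      simp only [Pi.one_apply] at hx
      exact hxG (by linarith)
    · exact Or.inl ⟨hxE, hxS⟩
  have hmarkov : P {x | σ ≤ g x} ≤ ENNReal.ofReal (r / σ) := by
    have h1 : σ * (P {x | σ ≤ g x}).toReal ≤ ∫ x, g x ∂P :=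
      mul_meas_ge_le_integral_of_nonneg hg0 integrable_condExp σ
    have h2 : ∫ x, g x ∂P = (P (S \ E)).toReal := by
      rw [hg_def, integral_condExp hm]
      exact integral_indicator_one' (m0 := m0) P (hSm0.diff hEm)
    have h3 : (P (S \ E)).toReal ≤ r := by
      have h4 : P (S \ E) ≤ ENNReal.ofReal r :=
        le_trans (measure_mono (by rw [Set.symmDiff_def]; exact Set.subset_union_right)) hES
      exact ENNReal.toReal_le_of_le_ofReal hr.le h4
    have h5 : (P {x | σ ≤ g x}).toReal ≤ r / σ := by
      rw [le_div_iff₀ hσ]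
      nlinarith
    exact (ENNReal.le_ofReal_iff_toReal_le (measure_ne_top P _) (by positivity)).mpr h5
  calc P (E \ {x | 1 - σ < (P[E.indicator (1 : Ω → ℝ) | m]) x})
      ≤ P ((E \ S) ∪ {x | σ ≤ g x}) := by
        refine measure_mono_ae (ae_le_set.mpr (measure_eq_zero_iff_ae_notMem.mpr ?_))
        filter_upwards [hsub2] with x h hx
        exact hx.2 (h hx.1)
    _ ≤ P (E \ S) + P {x | σ ≤ g x} := measure_union_le _ _
    _ ≤ ENNReal.ofReal r + ENNReal.ofReal (r / σ) := add_le_add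
        (le_trans (measure_mono (by rw [Set.symmDiff_def]; exact Set.subset_union_left)) hES)
        hmarkov
    _ = ENNReal.ofReal (r + r / σ) := (ENNReal.ofReal_add hr.le (by positivity)).symm

lemma aux_lt_meas {Ω : Type*} {m : MeasurableSpace Ω} {f : Ω → ℝ} (hf : Measurable[m] f)
    (c : ℝ) : MeasurableSet[m] {x | c < f x} :=
  measurableSet_lt measurable_const hf

lemma uip_key_null {Ω : Type*} [m0 : MeasurableSpace Ω] (P : Measure Ω) [IsProbabilityMeasure P]
    {I : Type*} [Fintype I]
    (m : I → MeasurableSpace Ω) (hm : ∀ i, m i ≤ m0)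
    (Bbig : I → MeasurableSpace Ω) (hbig : ∀ i, Bbig i ≤ m0)
    (E : I → Set Ω) (hE : ∀ i, MeasurableSet[Bbig i] (E i)) (hE0 : P (⋂ i, E i) = 0)
    (hindep : ∀ i, RelIndep m0 P (Bbig i) (⨆ j ∈ ({i}ᶜ : Set I), m j) (m i))
    {σ : ℝ} (hσ : 0 < σ) (hσn : (Fintype.card I : ℝ) * σ < 1) :
    P (⋂ i, {x | 1 - σ < (P[(E i).indicator (1 : Ω → ℝ) | m i]) x}) = 0 := by
  classical
  have hEm0 : ∀ i, MeasurableSet[m0] (E i) := fun i => hbig i _ (hE i)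
  set G : I → Set Ω := fun i => {x | 1 - σ < (P[(E i).indicator (1 : Ω → ℝ) | m i]) x}
    with hG_def
  have hGmeas : ∀ i, MeasurableSet[m i] (G i) := fun i =>
    aux_lt_meas (stronglyMeasurable_condExp.measurable) (1 - σ)
  have hGm0 : ∀ i, MeasurableSet[m0] (G i) := fun i => hm i _ (hGmeas i)
  have hGIm0 : MeasurableSet[m0] (⋂ j, G j) := MeasurableSet.iInter fun j => hGm0 j
  -- the key estimate
  have key2 : ∀ i, (P ((⋂ j, G j) \ E i)).toReal ≤ σ * (P (⋂ j, G j)).toReal := by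
    intro i
    set T : Set Ω := ⋂ j ∈ ({i}ᶜ : Set I), G j with hT_def
    have hTmeas : MeasurableSet[⨆ j ∈ ({i}ᶜ : Set I), m j] T :=
      MeasurableSet.biInter (Set.to_countable _) fun j hj =>
        (le_iSup₂ (f := fun (j : I) (_ : j ∈ ({i}ᶜ : Set I)) => m j) j hj) _ (hGmeas j)
    have hTm0 : MeasurableSet[m0] T :=
      (iSup₂_le fun j _ => hm j : (⨆ j ∈ ({i}ᶜ : Set I), m j) ≤ m0) _ hTmeas
    have hsplit : (⋂ j, G j) = G i ∩ T := by
      ext x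
      simp only [Set.mem_iInter, Set.mem_inter_iff, hT_def, Set.mem_compl_iff,
        Set.mem_singleton_iff]
      constructor
      · exact fun h => ⟨h i, fun j _ => h j⟩
      · rintro ⟨h1, h2⟩ j
        by_cases hj : j = i
        · exact hj ▸ h1
        · exact h2 j hj
    have hind1 : ∀ x, |(E i).indicator (1 : Ω → ℝ) x| ≤ 1 := fun x => by
      by_cases h : x ∈ E i <;> simp [Set.indicator_apply, h]
    have hind2 : ∀ x, |T.indicator (1 : Ω → ℝ) x| ≤ 1 := fun x => by
      by_cases h : x ∈ T <;> simp [Set.indicator_apply, h]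
    have hri := hindep i ((E i).indicator (1 : Ω → ℝ)) (T.indicator (1 : Ω → ℝ))
      ((@measurable_one ℝ Ω _ (Bbig i) _).indicator (hE i))
      ((@measurable_one ℝ Ω _ (⨆ j ∈ ({i}ᶜ : Set I), m j) _).indicator hTmeas)
      ⟨1, hind1⟩ ⟨1, hind2⟩
    have hmul : (fun x => (E i).indicator (1 : Ω → ℝ) x * T.indicator (1 : Ω → ℝ) x)
        = (E i ∩ T).indicator (1 : Ω → ℝ) := by
      funext x
      exact (congrFun Set.inter_indicator_one x).symm
    rw [hmul] at hri
    -- hri : P[(E i ∩ T).indicator 1 | m i] =ᵐ[P] fun x => e x * t x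
    have ht0 : 0 ≤ᵐ[P] P[T.indicator (1 : Ω → ℝ) | m i] :=
      condExp_nonneg (Filter.Eventually.of_forall fun x =>
        Set.indicator_nonneg (fun _ _ => zero_le_one) x)
    have t_int : Integrable (P[T.indicator (1 : Ω → ℝ) | m i]) P := integrable_condExp
    have het_int : Integrable (fun x => (P[(E i).indicator (1 : Ω → ℝ) | m i]) x
        * (P[T.indicator (1 : Ω → ℝ) | m i]) x) P :=
      integrable_condExp.congr hri
    have hdiffind : ∀ x, (T \ E i).indicator (1 : Ω → ℝ) x
        = T.indicator (1 : Ω → ℝ) x - (E i ∩ T).indicator (1 : Ω → ℝ) x := by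
      intro x
      by_cases hxT : x ∈ T <;> by_cases hxE : x ∈ E i <;>
        simp [Set.indicator_apply, hxT, hxE]
    have step1 : (P ((⋂ j, G j) \ E i)).toReal
        = ∫ x in G i, ((T \ E i).indicator (1 : Ω → ℝ)) x ∂P := by
      have hset : (⋂ j, G j) \ E i = G i ∩ (T \ E i) := by
        rw [hsplit]
        ext x
        simp only [Set.mem_diff, Set.mem_inter_iff]
        tauto
      rw [hset, setIntegral_indicator (hTm0.diff (hEm0 i))]
      simp [integral_const, Measure.restrict_apply_univ]
      rfl
    have step2 : ∫ x in G i, ((T \ E i).indicator (1 : Ω → ℝ)) x ∂P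
        = ∫ x in G i, (T.indicator (1 : Ω → ℝ) x - (E i ∩ T).indicator (1 : Ω → ℝ) x) ∂P := by
      simp only [hdiffind]
    have step3 : ∫ x in G i, (T.indicator (1 : Ω → ℝ) x - (E i ∩ T).indicator (1 : Ω → ℝ) x) ∂P
        = ∫ x in G i, T.indicator (1 : Ω → ℝ) x ∂P
          - ∫ x in G i, (E i ∩ T).indicator (1 : Ω → ℝ) x ∂P :=
      integral_sub ((integrable_indicator_one (m0 := m0) P hTm0).integrableOn)
        ((integrable_indicator_one (m0 := m0) P ((hEm0 i).inter hTm0)).integrableOn)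
    have step4a : ∫ x in G i, T.indicator (1 : Ω → ℝ) x ∂P
        = ∫ x in G i, (P[T.indicator (1 : Ω → ℝ) | m i]) x ∂P :=
      (setIntegral_condExp (hm i) (integrable_indicator_one (m0 := m0) P hTm0)
        (hGmeas i)).symm
    have step4b : ∫ x in G i, (E i ∩ T).indicator (1 : Ω → ℝ) x ∂P
        = ∫ x in G i, (P[(E i).indicator (1 : Ω → ℝ) | m i]) x
            * (P[T.indicator (1 : Ω → ℝ) | m i]) x ∂P := by
      rw [← setIntegral_condExp (hm i)
        (integrable_indicator_one (m0 := m0) P ((hEm0 i).inter hTm0)) (hGmeas i)]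
      exact integral_congr_ae (ae_restrict_of_ae hri)
    have step5 : ∫ x in G i, (P[T.indicator (1 : Ω → ℝ) | m i]) x ∂P
          - ∫ x in G i, (P[(E i).indicator (1 : Ω → ℝ) | m i]) x
            * (P[T.indicator (1 : Ω → ℝ) | m i]) x ∂P
        = ∫ x in G i, ((P[T.indicator (1 : Ω → ℝ) | m i]) x
            - (P[(E i).indicator (1 : Ω → ℝ) | m i]) x
            * (P[T.indicator (1 : Ω → ℝ) | m i]) x) ∂P :=
      (integral_sub t_int.integrableOn het_int.integrableOn).symm
    have step6 : ∫ x in G i, ((P[T.indicator (1 : Ω → ℝ) | m i]) x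
            - (P[(E i).indicator (1 : Ω → ℝ) | m i]) x
            * (P[T.indicator (1 : Ω → ℝ) | m i]) x) ∂P
        ≤ ∫ x in G i, σ * (P[T.indicator (1 : Ω → ℝ) | m i]) x ∂P := by
      refine setIntegral_mono_ae_restrict (t_int.sub het_int).integrableOn
        ((t_int.const_mul σ).integrableOn) ?_
      filter_upwards [ae_restrict_mem (hGm0 i), ae_restrict_of_ae ht0] with x hxG hxt
      have hxe : 1 - σ < (P[(E i).indicator (1 : Ω → ℝ) | m i]) x := hxG
      have h6 := mul_le_mul_of_nonneg_right
        (show 1 - (P[(E i).indicator (1 : Ω → ℝ) | m i]) x ≤ σ by linarith) hxt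
      rw [sub_mul, one_mul] at h6
      exact h6
    have step7 : ∫ x in G i, σ * (P[T.indicator (1 : Ω → ℝ) | m i]) x ∂P
        = σ * (P (⋂ j, G j)).toReal := by
      rw [integral_const_mul]
      congr 1
      rw [setIntegral_condExp (hm i) (integrable_indicator_one (m0 := m0) P hTm0) (hGmeas i)]
      rw [setIntegral_indicator hTm0, hsplit]
      simp [integral_const, Measure.restrict_apply_univ]
      rfl
    calc (P ((⋂ j, G j) \ E i)).toReal
        = ∫ x in G i, (P[T.indicator (1 : Ω → ℝ) | m i]) x ∂P
          - ∫ x in G i, (P[(E i).indicator (1 : Ω → ℝ) | m i]) x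
            * (P[T.indicator (1 : Ω → ℝ) | m i]) x ∂P := by
          rw [step1, step2, step3, step4a, step4b]
      _ ≤ σ * (P (⋂ j, G j)).toReal := by rw [step5, ← step7]; exact step6
  -- summing up
  have hcover : P (⋂ j, G j) ≤ ∑ i, P ((⋂ j, G j) \ E i) := by
    calc P (⋂ j, G j) ≤ P ((⋂ j, E j) ∪ ⋃ i, ((⋂ j, G j) \ E i)) := measure_mono (by
          intro x hx
          by_cases h : ∀ i, x ∈ E i
          · exact Or.inl (Set.mem_iInter.mpr h)
          · push_neg at h
            obtain ⟨i, hi⟩ := h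
            exact Or.inr (Set.mem_iUnion.mpr ⟨i, hx, hi⟩))
      _ ≤ P (⋂ j, E j) + P (⋃ i, ((⋂ j, G j) \ E i)) := measure_union_le _ _
      _ = P (⋃ i, ((⋂ j, G j) \ E i)) := by rw [hE0, zero_add]
      _ ≤ ∑ i, P ((⋂ j, G j) \ E i) := measure_iUnion_fintype_le _ _
  have hreal : (P (⋂ j, G j)).toReal ≤ (Fintype.card I : ℝ) * σ * (P (⋂ j, G j)).toReal := by
    have h1 : (P (⋂ j, G j)).toReal ≤ (∑ i, P ((⋂ j, G j) \ E i)).toReal :=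
      ENNReal.toReal_mono (by
        exact (ENNReal.sum_lt_top.mpr fun i _ => measure_lt_top P _).ne) hcover
    rw [ENNReal.toReal_sum (fun i _ => measure_ne_top P _)] at h1
    calc (P (⋂ j, G j)).toReal ≤ ∑ i, (P ((⋂ j, G j) \ E i)).toReal := h1
      _ ≤ ∑ _i : I, σ * (P (⋂ j, G j)).toReal := Finset.sum_le_sum fun i _ => key2 i
      _ = (Fintype.card I : ℝ) * σ * (P (⋂ j, G j)).toReal := by
          rw [Finset.sum_const, Finset.card_univ, nsmul_eq_mul]
          ring
  have hzero : (P (⋂ j, G j)).toReal = 0 := by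
    nlinarith [ENNReal.toReal_nonneg (a := P (⋂ j, G j))]
  have := (ENNReal.toReal_eq_zero_iff _).mp hzero
  exact this.resolve_right (measure_ne_top P _)

/-- **Limits of chains preserve the UIP.**  Let `A` be a totally ordered set, `I` a finite
index set, and for each `α ∈ A` let `(B_{α,i})_{i ∈ I}` be a tuple of sub-σ-algebras obeying
the UIP, increasing in `α`.  Let `B_i := ⋁_{α} B_{α,i}`, and suppose for every `i` and `α`
that `B_i` and `⋁_{j ≠ i} B_{α,j}` are relatively independent conditioning on `B_{α,i}`.
Then the tuple `(B_i)_{i ∈ I}` also obeys the UIP. -/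
theorem uip_limits_of_chains [m0 : MeasurableSpace Ω] (P : Measure Ω)
    [IsProbabilityMeasure P]
    (Breg : Set (Set Ω)) (hBalg : IsSetAlgebra Breg) (hBsub : ∀ s ∈ Breg, MeasurableSet s)
    {A : Type*} [LinearOrder A] {I : Type*} [Finite I]
    (Bc : A → I → MeasurableSpace Ω) (hsub : ∀ a i, Bc a i ≤ m0)
    (hmono : ∀ a b : A, a < b → ∀ i, Bc a i ≤ Bc b i)
    (hUIP : ∀ a : A, UIP m0 P Breg (Bc a))
    (hindep : ∀ (i : I) (a : A),
      RelIndep m0 P (⨆ b, Bc b i) (⨆ j ∈ ({i}ᶜ : Set I), Bc a j) (Bc a i)) :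
    UIP m0 P Breg (fun i => ⨆ a, Bc a i) := by
  intro E hE hE0 ε hε
  rcases isEmpty_or_nonempty I with hI | hI
  · rw [Set.iInter_of_empty] at hE0
    simp at hE0
  rcases isEmpty_or_nonempty A with hA | hA
  · -- all σ-algebras are trivial
    have hbot : ∀ i, E i = ∅ ∨ E i = Set.univ := by
      intro i
      have h := hE i
      beta_reduce at h
      rw [iSup_of_empty] at h
      exact MeasurableSpace.measurableSet_bot_iff.mp h
    have hex : ∃ i, E i = ∅ := by
      by_contra h
      push_neg at h
      have huniv : ⋂ i, E i = Set.univ := Set.iInter_eq_univ.mpr fun i =>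
        (hbot i).resolve_left (Set.nonempty_iff_ne_empty.mp (h i))
      rw [huniv] at hE0
      simp at hE0
    obtain ⟨i0, hi0⟩ := hex
    classical
    refine ⟨fun i => if E i = ∅ then ∅ else Set.univ, fun i => ?_, fun i => ?_, ?_⟩
    · by_cases h : E i = ∅ <;> simp only [h, if_true, if_false, ite_true, ite_false]
      · exact ⟨@MeasurableSet.empty Ω (⨆ a, Bc a i), hBalg.empty_mem⟩
      · exact ⟨@MeasurableSet.univ Ω (⨆ a, Bc a i),
          by simpa using hBalg.compl_mem hBalg.empty_mem⟩
    · by_cases h : E i = ∅ <;> simp [h]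
    · apply Set.subset_empty_iff.mp
      refine (Set.iInter_subset _ i0).trans ?_
      simp [hi0]
  -- main case
  classical
  have : Fintype I := Fintype.ofFinite I
  set n : ℕ := Fintype.card I with hn_def
  have hn : 0 < n := Fintype.card_pos
  set σ : ℝ := 1 / (2 * n) with hσ_def
  have hσ : 0 < σ := by positivity
  set r : ℝ := ε / (2 * (2 * n + 1)) with hr_def
  have hr : 0 < r := by positivity
  -- approximate each E i at some common level α
  have hmono' : ∀ (b c : A), b ≤ c → ∀ i, Bc b i ≤ Bc c i := fun b c h i =>
    h.lt_or_eq.elim (fun h' => hmono _ _ h' i) (fun h' => h' ▸ le_rfl)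
  have happrox : ∀ i, ∃ a, ∃ S : Set Ω, MeasurableSet[Bc a i] S ∧
      P (E i ∆ S) ≤ ENNReal.ofReal r := fun i =>
    uip_approx P (fun a => Bc a i) (fun a => hsub a i) (fun a b h => hmono' a b h i)
      (hE i) r hr
  choose a S hSmeas hSP using happrox
  obtain ⟨α, hα⟩ := Finset.exists_le (Finset.univ.image a)
  have hαi : ∀ i, a i ≤ α := fun i => hα _ (Finset.mem_image_of_mem a (Finset.mem_univ i))
  -- conditional expectations
  have hm : ∀ i, Bc α i ≤ m0 := hsub α
  have hEm0 : ∀ i, MeasurableSet[m0] (E i) :=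
    fun i => (iSup_le (fun b => hsub b i) : (⨆ b, Bc b i) ≤ m0) _ (hE i)
  set e : I → Ω → ℝ := fun i => P[(E i).indicator (fun _ => (1:ℝ)) | Bc α i] with he_def
  set G : I → Set Ω := fun i => {x | 1 - σ < e i x} with hG_def
  have hGmeas : ∀ i, MeasurableSet[Bc α i] (G i) := by
    intro i
    exact measurableSet_lt (@measurable_const _ _ _ (Bc α i) _)
      stronglyMeasurable_condExp.measurable
  have hGm0 : ∀ i, MeasurableSet[m0] (G i) := fun i => hm i _ (hGmeas i)
  -- Part 1 : P (E i \ G i) ≤ ε/2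
  have hEG : ∀ i, P (E i \ G i) ≤ ENNReal.ofReal (ε / 2) := by
    intro i
    have hSα : MeasurableSet[Bc α i] (S i) := hmono' _ _ (hαi i) i _ (hSmeas i)
    have h1 := uip_part1 P (hm i) (hEm0 i) hSα hσ hr (hSP i)
    refine le_trans h1 ?_
    apply ENNReal.ofReal_le_ofReal
    have heq : r + r / σ = ε / 2 := by
      rw [hr_def, hσ_def]
      have hnR : (0:ℝ) < (n : ℝ) := by exact_mod_cast hn
      field_simp
      ring
    exact heq.le
  -- Part 2 : P (⋂ i, G i) = 0
  have hG0 : P (⋂ i, G i) = 0 := by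
    have hcard : (Fintype.card I : ℝ) * σ < 1 := by
      have hnR : (0:ℝ) < (n : ℝ) := by exact_mod_cast hn
      rw [hσ_def]
      rw [show (Fintype.card I : ℝ) = (n : ℝ) from rfl]
      rw [mul_one_div, div_lt_one (by positivity)]
      linarith
    exact uip_key_null P (fun i => Bc α i) (fun i => hm i) (fun i => ⨆ b, Bc b i)
      (fun i => iSup_le fun b => hsub b i) E (fun i => hE i) hE0 (fun i => hindep i α)
      hσ hcard
  -- Part 3 : apply the UIP at level α
  obtain ⟨F, hF1, hF2, hF3⟩ := hUIP α G hGmeas hG0 (ε / 2) (by positivity)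
  refine ⟨F, fun i => ⟨?_, (hF1 i).2⟩, fun i => ?_, hF3⟩
  · exact (le_iSup (fun b => Bc b i) α) _ (hF1 i).1
  · calc P (E i \ F i) ≤ P ((E i \ G i) ∪ (G i \ F i)) := by
          apply measure_mono
          intro x ⟨hx1, hx2⟩
          by_cases hxG : x ∈ G i
          · exact Or.inr ⟨hxG, hx2⟩
          · exact Or.inl ⟨hx1, hxG⟩
      _ ≤ P (E i \ G i) + P (G i \ F i) := measure_union_le _ _
      _ ≤ ENNReal.ofReal (ε / 2) + ENNReal.ofReal (ε / 2) := add_le_add (hEG i) (hF2 i)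
      _ = ENNReal.ofReal ε := by
          rw [← ENNReal.ofReal_add (by positivity) (by positivity)]
          simp [add_halves]
end
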